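/- Let F = [[0,−1],[1,0]]. Let a(x) = [A(x), B(x)]ᵀ, x ∈ ℕ, be a sequence of 2×1 real vectors with ∑_{x≥0} ‖a(x)‖² < ∞, and for x ≠ y define K(x,y) = (A(x)B(y) − A(y)B(x))/(x−y). Suppose a(x+1) = (Lx + M) a(x) for all x ∈ ℕ, where L and M are constant 2×2 real matrices with det L = 0, det M = 1, and such that MᵀFL is symmetric with eigenvalues λ ∈ ℝ∖{0} and 0. Let [α,β]ᵀ be a real unit eigenvector of MᵀFL for the eigenvalue λ. Then, setting φ(x) = |λ|^{1/2}(α A(x) + β B(x)), one has (φ(x)) ∈ ℓ² and K(x,y) = −sgn(λ) ∑_{k=0}^∞ φ(x+k) φ(y+k) for all x,y ∈ ℕ with x ≠ y. -/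

import Mathlib

/-!
Write `a(x) = [A(x), B(x)]ᵀ` and `W(x, y) = A(x)B(y) − A(y)B(x) = a(y)ᵀ F a(x)`, so that
`K(x, y) = W(x, y) / (x − y)`. For a 2×2 matrix `P` one has `Pᵀ F P = det P • F`; hence, with
`S = MᵀFL` and `Fᵀ = −F`, the transfer matrices satisfy `(pL + M)ᵀ F (qL + M) = F + (q − p) S`,
and the recurrence gives `W(p+1, q+1) − W(p, q) = (p − q) a(q)ᵀ S a(p)`. Since `det S = 0`, the
symmetric matrix `S` is `λ vvᵀ` with `v = [α, β]ᵀ`, so the increment is `(p − q) λ u(p) u(q)` with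
`u = α A + β B`. Along the diagonal `(x + k, y + k)` the difference `p − q = x − y` is constant and
`W → 0` because `a ∈ ℓ²`, so telescoping gives `W(x, y) = −(x − y) λ ∑ₖ u(x+k) u(y+k)`, which is the
claim since `λ = sgn(λ) |λ|`.
-/

open Matrix Filter Topology

section TwoByTwo

variable {R : Type*} [CommRing R]

variable (R) in
def symplecticForm : Matrix (Fin 2) (Fin 2) R := !![0, -1; 1, 0]

theorem transpose_symplecticForm : (symplecticForm R)ᵀ = -symplecticForm R := by
  ext i j
  fin_cases i <;> fin_cases j <;> simp [symplecticForm]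

theorem transpose_mul_symplecticForm_mul_self (P : Matrix (Fin 2) (Fin 2) R) :
    Pᵀ * symplecticForm R * P = P.det • symplecticForm R := by
  ext i j
  fin_cases i <;> fin_cases j <;>
    simp only [symplecticForm, Fin.zero_eta, Fin.mk_one, Fin.isValue, mul_apply, transpose_apply,
      of_apply, cons_val', cons_val_fin_one, Fin.sum_univ_two, cons_val_zero, cons_val_one,
      det_fin_two, Matrix.smul_apply, smul_eq_mul] <;> ring

theorem transpose_transpose_mul_symplecticForm_mul (P Q : Matrix (Fin 2) (Fin 2) R) :
    (Pᵀ * symplecticForm R * Q)ᵀ = -(Qᵀ * symplecticForm R * P) := by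
  simp [transpose_mul, transpose_symplecticForm, Matrix.mul_assoc]

theorem transpose_smul_add_mul_symplecticForm_mul_smul_add {L M : Matrix (Fin 2) (Fin 2) R}
    (hL : L.det = 0) (hM : M.det = 1)
    (hS : (Mᵀ * symplecticForm R * L).IsSymm) (p q : R) :
    (p • L + M)ᵀ * symplecticForm R * (q • L + M) =
      symplecticForm R + (q - p) • (Mᵀ * symplecticForm R * L) := by
  have hLM : Lᵀ * symplecticForm R * M = -(Mᵀ * symplecticForm R * L) := by
    rw [← hS, transpose_transpose_mul_symplecticForm_mul, neg_neg]
  have hLL := transpose_mul_symplecticForm_mul_self L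
  have hMM := transpose_mul_symplecticForm_mul_self M
  rw [hL, zero_smul] at hLL
  rw [hM, one_smul] at hMM
  simp only [transpose_add, transpose_smul, add_mul, mul_add, Matrix.smul_mul, Matrix.mul_smul,
    hLL, hMM, hLM]
  module

theorem mulVec_dotProduct_mulVec_mulVec {n : Type*} [Fintype n] (T B U : Matrix n n R)
    (x y : n → R) : (T *ᵥ x) ⬝ᵥ B *ᵥ (U *ᵥ y) = x ⬝ᵥ (Tᵀ * B * U) *ᵥ y := by
  rw [Matrix.mul_assoc, ← mulVec_mulVec, dotProduct_transpose_mulVec, dotProduct_comm,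
    mulVec_mulVec]

theorem dotProduct_symplecticForm_mulVec_succ {a : ℕ → Fin 2 → R}
    {L M : Matrix (Fin 2) (Fin 2) R} (hrec : ∀ n : ℕ, a (n + 1) = ((n : R) • L + M) *ᵥ a n)
    (hL : L.det = 0) (hM : M.det = 1)
    (hS : (Mᵀ * symplecticForm R * L).IsSymm) (p q : ℕ) :
    a (q + 1) ⬝ᵥ symplecticForm R *ᵥ a (p + 1) =
      a q ⬝ᵥ symplecticForm R *ᵥ a p +
        ((p : R) - q) * (a q ⬝ᵥ (Mᵀ * symplecticForm R * L) *ᵥ a p) := by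
  rw [hrec, hrec, mulVec_dotProduct_mulVec_mulVec,
    transpose_smul_add_mul_symplecticForm_mul_smul_add hL hM hS, add_mulVec, smul_mulVec,
    dotProduct_add, dotProduct_smul, smul_eq_mul]

theorem det_transpose_mul_symplecticForm_mul_eq_zero (M : Matrix (Fin 2) (Fin 2) R)
    {L : Matrix (Fin 2) (Fin 2) R} (hL : L.det = 0) :
    (Mᵀ * symplecticForm R * L).det = 0 := by
  rw [det_mul, hL, mul_zero]

end TwoByTwo

theorem eq_smul_vecMulVec_of_isSymm_of_det_eq_zero {K : Type*} [Field K]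
    {S : Matrix (Fin 2) (Fin 2) K} (hS : S.IsSymm) (hdet : S.det = 0) {lam : K} (hlam : lam ≠ 0)
    {v : Fin 2 → K} (hv : v ⬝ᵥ v = 1) (hSv : S *ᵥ v = lam • v) : S = lam • vecMulVec v v := by
  have h0 := congrFun hSv 0
  have h1 := congrFun hSv 1
  have hq : S 1 0 = S 0 1 := hS.apply 0 1
  simp only [mulVec, dotProduct, Fin.sum_univ_two, Pi.smul_apply, smul_eq_mul] at h0 h1 hv
  rw [det_fin_two, hq] at hdet
  rw [hq] at h1
  set p := S 0 0
  set q := S 0 1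
  set r := S 1 1
  set a := v 0
  set b := v 1
  -- `det (S - λ) = 0` as `λ` is an eigenvalue; with `det S = 0` this forces `tr S = λ`.
  have hdet_sub_a : ((p - lam) * (r - lam) - q * q) * a = 0 := by
    linear_combination (r - lam) * h0 - q * h1
  have hdet_sub_b : ((p - lam) * (r - lam) - q * q) * b = 0 := by
    linear_combination (p - lam) * h1 - q * h0
  have hdet_sub : (p - lam) * (r - lam) - q * q = 0 := by
    linear_combination a * hdet_sub_a + b * hdet_sub_b - ((p - lam) * (r - lam) - q * q) * hv
  have htr : p + r = lam := mul_left_cancel₀ hlam (by linear_combination hdet - hdet_sub)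
  have hpb : q * a = p * b := by linear_combination h1 - b * htr
  have hra : q * b = r * a := by linear_combination h0 - a * htr
  ext i j
  fin_cases i <;> fin_cases j <;>
    simp only [Fin.zero_eta, Fin.mk_one, Fin.isValue, vecMulVec, Matrix.smul_apply, of_apply,
      smul_eq_mul]
  · linear_combination a * h0 - b * hpb - p * hv
  · linear_combination b * h0 + a * hpb - q * hv
  · linear_combination hq + b * h0 + a * hpb - q * hv
  · linear_combination b * h1 - a * hra - r * hv

theorem wronskian_succ_sub {A B : ℕ → ℝ} {L M : Matrix (Fin 2) (Fin 2) ℝ}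
    (hrec : ∀ n : ℕ, ![A (n + 1), B (n + 1)] = ((n : ℝ) • L + M) *ᵥ ![A n, B n])
    (hL : L.det = 0) (hM : M.det = 1) {lam α β : ℝ}
    (hS : Mᵀ * symplecticForm ℝ * L = lam • vecMulVec ![α, β] ![α, β]) (p q : ℕ) :
    A (p + 1) * B (q + 1) - A (q + 1) * B (p + 1) - (A p * B q - A q * B p) =
      lam * ((p : ℝ) - q) * ((α * A p + β * B p) * (α * A q + β * B q)) := by
  have hsymm : (Mᵀ * symplecticForm ℝ * L).IsSymm := by
    rw [hS, IsSymm, transpose_smul, transpose_vecMulVec]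
  have h := dotProduct_symplecticForm_mulVec_succ (a := fun n => ![A n, B n]) hrec hL hM hsymm p q
  rw [hS] at h
  simp only [symplecticForm, dotProduct, mulVec, vecMulVec, Fin.sum_univ_two, Matrix.smul_apply,
    of_apply, cons_val_zero, cons_val_one, smul_eq_mul] at h
  linear_combination h

theorem tendsto_atTop_zero_of_summable_sq {f : ℕ → ℝ} (hf : Summable fun n => f n ^ 2) :
    Tendsto f atTop (𝓝 0) :=
  squeeze_zero_norm (fun n => Real.abs_le_sqrt le_rfl)
    (by simpa using hf.tendsto_atTop_zero.sqrt)

theorem Summable.mul_of_sq {ι : Type*} {f g : ι → ℝ} (hf : Summable fun i => f i ^ 2)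
    (hg : Summable fun i => g i ^ 2) : Summable fun i => f i * g i :=
  ((hf.add hg).div_const 2).of_norm_bounded fun i => by
    rw [Real.norm_eq_abs, abs_mul, le_div_iff₀ two_pos, ← sq_abs (f i), ← sq_abs (g i)]
    linarith [two_mul_le_add_sq |f i| |g i|]

theorem tsum_eq_neg_of_eq_sub_of_tendsto_zero {G : Type*} [AddCommGroup G] [TopologicalSpace G]
    [IsTopologicalAddGroup G] [T2Space G] {f g : ℕ → G} (hf : Summable f)
    (hfg : ∀ k, f k = g (k + 1) - g k) (hg : Tendsto g atTop (𝓝 0)) : ∑' k, f k = -g 0 := by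
  refine tendsto_nhds_unique hf.hasSum.tendsto_sum_nat ?_
  simpa only [hfg, Finset.sum_range_sub, zero_sub] using hg.sub_const (g 0)

theorem tendsto_wronskian_shift_zero {A B : ℕ → ℝ}
    (ha : Summable fun n => A n ^ 2 + B n ^ 2) (x y : ℕ) :
    Tendsto (fun k => A (x + k) * B (y + k) - A (y + k) * B (x + k)) atTop (𝓝 0) := by
  have hA := tendsto_atTop_zero_of_summable_sq <|
    ha.of_nonneg_of_le (fun n => sq_nonneg _) fun n => le_add_of_nonneg_right (sq_nonneg (B n))
  have hB := tendsto_atTop_zero_of_summable_sq <|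
    ha.of_nonneg_of_le (fun n => sq_nonneg _) fun n => le_add_of_nonneg_left (sq_nonneg (A n))
  have shift (c : ℕ) : Tendsto (c + ·) atTop atTop := by
    simpa only [add_comm _ c] using tendsto_add_atTop_nat c
  simpa using ((hA.comp (shift x)).mul (hB.comp (shift y))).sub
    ((hA.comp (shift y)).mul (hB.comp (shift x)))

theorem mul_tsum_shift_mul_eq_neg {W : ℕ → ℕ → ℝ} {u : ℕ → ℝ} {c : ℝ}
    (hu : Summable fun n => u n ^ 2)
    (hW : ∀ p q : ℕ, W (p + 1) (q + 1) - W p q = c * ((p : ℝ) - q) * (u p * u q)) {x y : ℕ}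
    (hW0 : Tendsto (fun k => W (x + k) (y + k)) atTop (𝓝 0)) :
    c * ((x : ℝ) - y) * ∑' k, u (x + k) * u (y + k) = -W x y := by
  have hshift (z : ℕ) : Summable fun k => u (z + k) ^ 2 := by
    simpa only [add_comm z] using (summable_nat_add_iff z).mpr hu
  rw [← tsum_mul_left]
  refine tsum_eq_neg_of_eq_sub_of_tendsto_zero (((hshift x).mul_of_sq (hshift y)).mul_left _)
    (fun k => ?_) hW0
  rw [← add_assoc, ← add_assoc, hW]
  push_cast
  ring

theorem Real.sign_mul_abs (r : ℝ) : Real.sign r * |r| = r := by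
  rcases lt_trichotomy r 0 with hr | rfl | hr
  · rw [Real.sign_of_neg hr, abs_of_neg hr, neg_one_mul, neg_neg]
  · rw [abs_zero, mul_zero]
  · rw [Real.sign_of_pos hr, abs_of_pos hr, one_mul]

theorem stmt_5_general (A B : ℕ → ℝ)
    (ha : Summable fun x : ℕ => (A x) ^ 2 + (B x) ^ 2)
    (K : ℕ → ℕ → ℝ)
    (hK : ∀ x y : ℕ, x ≠ y → K x y = (A x * B y - A y * B x) / ((x : ℝ) - y))
    (L M : Matrix (Fin 2) (Fin 2) ℝ)
    (hrec : ∀ x : ℕ, ![A (x + 1), B (x + 1)] = ((x : ℝ) • L + M).mulVec ![A x, B x])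
    (hL : L.det = 0) (hM : M.det = 1)
    (hsymm : (Mᵀ * !![(0 : ℝ), -1; 1, 0] * L)ᵀ = Mᵀ * !![(0 : ℝ), -1; 1, 0] * L)
    (lam : ℝ) (hlam : lam ≠ 0)
    (α β : ℝ) (hunit : α ^ 2 + β ^ 2 = 1)
    (heig : (Mᵀ * !![(0 : ℝ), -1; 1, 0] * L).mulVec ![α, β] = lam • ![α, β]) :
    (Summable fun x : ℕ => (Real.sqrt |lam| * (α * A x + β * B x)) ^ 2)
    ∧ ∀ x y : ℕ, x ≠ y →
        K x y = -(Real.sign lam) *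
          ∑' k : ℕ, (Real.sqrt |lam| * (α * A (x + k) + β * B (x + k)))
            * (Real.sqrt |lam| * (α * A (y + k) + β * B (y + k))) := by
  have hS : Mᵀ * symplecticForm ℝ * L = lam • vecMulVec ![α, β] ![α, β] :=
    eq_smul_vecMulVec_of_isSymm_of_det_eq_zero hsymm
      (det_transpose_mul_symplecticForm_mul_eq_zero M hL) hlam
      (by simpa [dotProduct, ← sq] using hunit) heig
  have hu : Summable fun n => (α * A n + β * B n) ^ 2 :=
    ha.of_nonneg_of_le (fun n => sq_nonneg _) fun n => by
      nlinarith [sq_nonneg (β * A n - α * B n)]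
  have hsq : Real.sqrt |lam| ^ 2 = |lam| := Real.sq_sqrt (abs_nonneg lam)
  refine ⟨by simpa only [mul_pow, hsq] using hu.mul_left |lam|, fun x y hxy => ?_⟩
  have hsum := mul_tsum_shift_mul_eq_neg (W := fun p q => A p * B q - A q * B p) hu
    (wronskian_succ_sub hrec hL hM hS) (tendsto_wronskian_shift_zero ha x y)
  have hxy' : (x : ℝ) - y ≠ 0 := sub_ne_zero.mpr (Nat.cast_injective.ne hxy)
  have hφ (b c : ℝ) : Real.sqrt |lam| * b * (Real.sqrt |lam| * c) = |lam| * (b * c) := by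
    linear_combination b * c * hsq
  simp only [hφ, tsum_mul_left]
  rw [← Real.sign_mul_abs lam] at hsum
  rw [hK x y hxy, div_eq_iff hxy']
  linear_combination hsum

/-- Corollary 5 of the paper: if `a(x+1) = (Lx + M)a(x)` where `det L = 0`, `det M = 1` and
`MᵀFL` is symmetric with eigenvalues `λ ≠ 0` and `0`, then the Tracy–Widom kernel built from
`a(x) = [A(x),B(x)]ᵀ` is (up to sign) the square of the Hankel matrix with symbol
`φ(x) = |λ|^{1/2}(α A(x) + β B(x))`. -/
theorem stmt_5 (A B : ℕ → ℝ)
    (ha : Summable fun x : ℕ => (A x) ^ 2 + (B x) ^ 2)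
    (K : ℕ → ℕ → ℝ)
    (hK : ∀ x y : ℕ, x ≠ y → K x y = (A x * B y - A y * B x) / ((x : ℝ) - y))
    (L M : Matrix (Fin 2) (Fin 2) ℝ)
    (hrec : ∀ x : ℕ, ![A (x + 1), B (x + 1)] = ((x : ℝ) • L + M).mulVec ![A x, B x])
    (hL : L.det = 0) (hM : M.det = 1)
    (hsymm : (Mᵀ * !![(0 : ℝ), -1; 1, 0] * L)ᵀ = Mᵀ * !![(0 : ℝ), -1; 1, 0] * L)
    (lam : ℝ) (hlam : lam ≠ 0)
    (hzero : ∃ v : Fin 2 → ℝ, v ≠ 0 ∧ (Mᵀ * !![(0 : ℝ), -1; 1, 0] * L).mulVec v = 0)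
    (α β : ℝ) (hunit : α ^ 2 + β ^ 2 = 1)
    (heig : (Mᵀ * !![(0 : ℝ), -1; 1, 0] * L).mulVec ![α, β] = lam • ![α, β]) :
    (Summable fun x : ℕ => (Real.sqrt |lam| * (α * A x + β * B x)) ^ 2)
    ∧ ∀ x y : ℕ, x ≠ y →
        K x y = -(Real.sign lam) *
          ∑' k : ℕ, (Real.sqrt |lam| * (α * A (x + k) + β * B (x + k)))
            * (Real.sqrt |lam| * (α * A (y + k) + β * B (y + k))) :=
  stmt_5_general A B ha K hK L M hrec hL hM hsymm lam hlam α β hunit heig
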